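/- Let G be a countable discrete group and H ≤ G a subgroup, and suppose there exist C_h > 0 and w : G → [1,∞) such that ‖f‖_{h,(G,H)} ≤ C_h‖f·w‖_{(2,1),(G,H)} for every finitely supported f : G → ℂ. Let K ≤ G be a subgroup and set L = K ∩ H. Then ‖f‖_{h,(K,L)} ≤ C_h‖f·(w|_K)‖_{(2,1),(K,L)} for every finitely supported f : K → ℂ. Moreover, if G is generated by a finite symmetric set with word length ℓ, the radial majorant W(t) = sup{w(g) : ℓ(g) ≤ t} is subexponential (log W(t)/t → 0), and K is generated by a finite symmetric set with word length ℓ_K, then (K,L) ∈ SLC_subexp with respect to ℓ_K. -/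

import Mathlib

open scoped ENNReal
open Filter Topology

noncomputable section

namespace PaperRD

variable {G : Type*} [Group G]

/-- The fiber summation (push-forward) `π_# f` of a real-valued function on `G`
along the projection `G → G ⧸ H` onto the space of left cosets. -/
def fiberSum (H : Subgroup G) (f : G → ℝ) (x : G ⧸ H) : ℝ :=
  ∑' g : {g : G // (QuotientGroup.mk g : G ⧸ H) = x}, f (g : G)

/-- The `ℓ^q`-norm (valued in `ℝ≥0∞`) of a function on a type. -/
def lqNorm {X : Type*} {E : Type*} [Norm E] (q : ℝ) (ξ : X → E) : ℝ≥0∞ :=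
  (∑' x : X, ENNReal.ofReal ‖ξ x‖ ^ q) ^ (1 / q)

/-- The quasi-regular convolution operator `λ_X(f)` acting on functions on `G ⧸ H`:
`(λ_X(f)ξ)(x) = ∑_{g ∈ G} f(g) ξ(g⁻¹ x)`. -/
def lam (H : Subgroup G) (f : G → ℂ) (ξ : G ⧸ H → ℂ) (x : G ⧸ H) : ℂ :=
  ∑' g : G, f g * ξ ((g⁻¹ : G) • x)

/-- Operator norm (in `ℝ≥0∞`) of a map on functions, with respect to the `ℓ^q` norms:
the supremum of `‖Tξ‖_q` over the unit ball. -/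
def opNorm {X : Type*} (q : ℝ) (T : (X → ℂ) → (X → ℂ)) : ℝ≥0∞ :=
  ⨆ ξ : {ξ : X → ℂ // lqNorm q ξ ≤ 1}, lqNorm q (T (ξ : X → ℂ))

/-- The spectral radius `r_q(μ) = lim_n ‖T_q^n‖^{1/n}`; since the sequence of norms is
submultiplicative the limit exists and equals `inf_n ‖T_q^n‖^{1/n}`, which we take as
the definition. -/
def specRad (H : Subgroup G) (μ : G → ℝ) (q : ℝ) : ℝ :=
  (⨅ n : ℕ, opNorm q ((lam H (fun g => (μ g : ℂ)))^[n + 1]) ^ (1 / (n + 1 : ℝ))).toReal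

/-- `c(G,H;μ) = sup_{p ∈ [2,∞)} ( -p · log r_{p/(p-1)}(μ) )`. -/
def cval (H : Subgroup G) (μ : G → ℝ) : ℝ :=
  sSup {y : ℝ | ∃ p : ℝ, 2 ≤ p ∧ y = -p * Real.log (specRad H μ (p / (p - 1)))}

/-- Convolution of real functions on `G`. -/
def conv (f φ : G → ℝ) (g : G) : ℝ :=
  ∑' y : G, f y * φ (y⁻¹ * g)

open scoped Classical in
/-- Convolution powers `μ^{*n}` (with `μ^{*0} = δ_e`). -/
def convPow (μ : G → ℝ) : ℕ → G → ℝ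
  | 0 => fun g => if g = 1 then 1 else 0
  | n + 1 => conv μ (convPow μ n)

/-- `ν_n = π_#(μ^{*n}) = μ^{*n} * δ_{eH}`, the distribution at time `n` of the
`μ`-random walk on `G ⧸ H` started at the base coset. -/
def walkDist (H : Subgroup G) (μ : G → ℝ) (n : ℕ) : G ⧸ H → ℝ :=
  fiberSum H (convPow μ n)

/-- Shannon entropy `H(ν) = -∑ ν log ν` (with the convention `0 log 0 = 0`,
automatic since `Real.log 0 = 0`). -/
def shannon {X : Type*} (ν : X → ℝ) : ℝ :=
  -∑' x : X, ν x * Real.log (ν x)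

/-- Rényi entropy of order `α`: `H_α(ν) = (1/(1-α)) log ∑ ν(x)^α`. -/
def renyi {X : Type*} (α : ℝ) (ν : X → ℝ) : ℝ :=
  (1 / (1 - α)) * Real.log (∑' x : X, ν x ^ α)

/-- Word length with respect to a generating set `S`. -/
def wordLength (S : Set G) (g : G) : ℕ :=
  sInf {n : ℕ | ∃ l : List G, (∀ s ∈ l, s ∈ S) ∧ l.length = n ∧ l.prod = g}

/-- The mixed `(2,1)`-norm of a function on `G` relative to the pair `(G,H)`:
`‖f‖_{(2,1)} = ( ∑_{x ∈ G/H} ( ∑_{g ∈ x} |f(g)| )² )^{1/2}`. -/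
def norm21 (H : Subgroup G) (f : G → ℂ) : ℝ :=
  Real.sqrt (∑' x : G ⧸ H,
    (∑' g : {g : G // (QuotientGroup.mk g : G ⧸ H) = x}, ‖f (g : G)‖) ^ 2)

/-- Convolution of complex functions on `G`. -/
def convC (f φ : G → ℂ) (g : G) : ℂ :=
  ∑' y : G, f y * φ (y⁻¹ * g)

/-- The Haagerup-type norm `‖f‖_h` for the pair `(G,H)`:
the supremum of `‖f ∗ φ‖_{(2,1)}` over finitely supported nonnegative `φ` with
`‖φ‖_{(2,1)} ≤ 1`. -/
def hNorm (H : Subgroup G) (f : G → ℂ) : ℝ :=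
  sSup {r : ℝ | ∃ φ : G → ℝ, (Function.support φ).Finite ∧ (∀ y, 0 ≤ φ y) ∧
    norm21 H (fun g => (φ g : ℂ)) ≤ 1 ∧
    r = norm21 H (convC f (fun g => (φ g : ℂ)))}

/-- The pair `(G,H)` has pair rapid decay w.r.t. the length `ℓ`, with exponent `s`. -/
def HasPairRDWith (H : Subgroup G) (ℓ : G → ℕ) (s : ℝ) : Prop :=
  ∃ C : ℝ, 0 < C ∧ ∀ f : G → ℂ, (Function.support f).Finite →
    hNorm H f ≤ C * norm21 H (fun g => f g * (((1 + (ℓ g : ℝ)) ^ s : ℝ) : ℂ))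

/-- The pair `(G,H)` has pair rapid decay w.r.t. the length `ℓ`. -/
def HasPairRD (H : Subgroup G) (ℓ : G → ℕ) : Prop :=
  ∃ s : ℝ, 0 < s ∧ HasPairRDWith H ℓ s

/-- Radial majorant `W(t) = sup { w(g) : ℓ(g) ≤ t }` of a weight `w`. -/
def radialMaj (ℓ : G → ℕ) (w : G → ℝ) (t : ℕ) : ℝ :=
  sSup (w '' {g : G | ℓ g ≤ t})

/-- The pair `(G,H)` satisfies subexponential Lorentz control (`SLC_subexp`)
w.r.t. the length `ℓ`: there is a weight `w ≥ 1` with `‖f‖_h ≤ C ‖f·w‖_{(2,1)}`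
for all finitely supported `f`, whose radial majorant `W` satisfies
`log W(t) / t → 0`. -/
def SLCsubexp (H : Subgroup G) (ℓ : G → ℕ) : Prop :=
  ∃ C : ℝ, 0 < C ∧ ∃ w : G → ℝ, (∀ g, 1 ≤ w g) ∧
    (∀ f : G → ℂ, (Function.support f).Finite →
      hNorm H f ≤ C * norm21 H (fun g => f g * (w g : ℂ))) ∧
    Tendsto (fun t : ℕ => Real.log (radialMaj ℓ w t) / (t : ℝ)) atTop (𝓝 0)

end PaperRD

/-!
Extension by zero identifies finitely supported functions on `K` with finitely supported
functions on `G` vanishing off `K`. It commutes with convolution and preserves the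
`(2,1)`-norm, because the cosets of `L = H ∩ K` in `K` embed into `G ⧸ H` and the fibres
correspond. Hence every competitor in the supremum defining `‖f‖_{h,(K,L)}` is one for
`‖f‖_{h,(G,H)}`, once the latter supremum is known to be finite (a real `sSup` of an
unbounded set is `0`). Finiteness is Young's inequality `‖F ∗ φ‖_{(2,1)} ≤ ‖F‖₁ ‖φ‖_{(2,1)}`,
which follows from the triangle inequality and left invariance of the `(2,1)`-norm.

For the growth condition, the generators of `K` have bounded `G`-length `M`, so
`ℓ_G ≤ M ℓ_K` on `K` and the radial majorant of `w|_K` at `t` is at most that of `w` at `M t`;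
the balls of `G` are finite, so these majorants are genuine suprema.
-/

namespace PaperRD

open Function

variable {G : Type*} [Group G]

section Norm21

variable (H : Subgroup G)

lemma norm21_eq_sqrt_tsum_fiberSum (ψ : G → ℂ) :
    norm21 H ψ = √(∑' x, fiberSum H (fun g => ‖ψ g‖) x ^ 2) := rfl

lemma norm21_nonneg (ψ : G → ℂ) : 0 ≤ norm21 H ψ := Real.sqrt_nonneg _

lemma fiberSum_nonneg {f : G → ℝ} (hf : 0 ≤ f) (x : G ⧸ H) : 0 ≤ fiberSum H f x :=
  tsum_nonneg fun g => hf g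

lemma summable_fiber_norm {ψ : G → ℂ} (hψ : (support ψ).Finite) (x : G ⧸ H) :
    Summable fun g : {g : G // (g : G ⧸ H) = x} => ‖ψ g‖ :=
  summable_of_hasFiniteSupport <|
    (hψ.preimage Subtype.val_injective.injOn).subset fun _ h => norm_ne_zero_iff.mp h

lemma support_fiberSum_subset (f : G → ℝ) :
    support (fiberSum H f) ⊆ (↑) '' support f := by
  intro x hx
  by_contra hx'
  refine hx ((tsum_congr fun g => ?_).trans tsum_zero)
  by_contra hg
  exact hx' ⟨g, hg, g.2⟩

lemma summable_fiberSum_norm_sq {ψ : G → ℂ} (hψ : (support ψ).Finite) :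
    Summable fun x => fiberSum H (fun g => ‖ψ g‖) x ^ 2 :=
  summable_of_hasFiniteSupport <| ((hψ.subset (support_comp_subset norm_zero ψ)).image _).subset
    ((support_pow _ two_ne_zero).trans_subset (support_fiberSum_subset H _))

lemma fiberSum_translate (f : G → ℝ) (y : G) (x : G ⧸ H) :
    fiberSum H (fun g => f (y⁻¹ * g)) x = fiberSum H f (y⁻¹ • x) := by
  let e : {g : G // (g : G ⧸ H) = y⁻¹ • x} ≃ {g : G // (g : G ⧸ H) = x} :=
    (Equiv.mulLeft y).subtypeEquiv fun g => by rw [eq_inv_smul_iff]; rfl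
  rw [fiberSum, ← e.tsum_eq]
  simp [e, fiberSum]

lemma norm21_translate (ψ : G → ℂ) (y : G) :
    norm21 H (fun g => ψ (y⁻¹ * g)) = norm21 H ψ := by
  simp only [norm21_eq_sqrt_tsum_fiberSum, fiberSum_translate H (fun g => ‖ψ g‖)]
  exact congrArg _ ((MulAction.toPerm y⁻¹).tsum_eq fun x => fiberSum H (fun g => ‖ψ g‖) x ^ 2)

lemma norm21_const_mul (c : ℂ) (ψ : G → ℂ) :
    norm21 H (fun g => c * ψ g) = ‖c‖ * norm21 H ψ := by
  have hfiber (x : G ⧸ H) :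
      fiberSum H (fun g => ‖c * ψ g‖) x = ‖c‖ * fiberSum H (fun g => ‖ψ g‖) x := by
    simp only [fiberSum, norm_mul, tsum_mul_left]
  simp only [norm21_eq_sqrt_tsum_fiberSum, hfiber, mul_pow, tsum_mul_left]
  rw [Real.sqrt_mul (sq_nonneg _), Real.sqrt_sq (norm_nonneg c)]

lemma sqrt_tsum_add_sq_le {X : Type*} {a b : X → ℝ} (ha : 0 ≤ a) (hb : 0 ≤ b)
    (ha2 : Summable fun x => a x ^ 2) (hb2 : Summable fun x => b x ^ 2) :
    (Summable fun x => (a x + b x) ^ 2) ∧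
      √(∑' x, (a x + b x) ^ 2) ≤ √(∑' x, a x ^ 2) + √(∑' x, b x ^ 2) := by
  simp only [← Real.rpow_two] at ha2 hb2 ⊢
  simpa only [Real.sqrt_eq_rpow] using
    Real.Lp_add_le_tsum_of_nonneg one_le_two ha hb ha2 hb2

lemma norm21_add_le {ψ₁ ψ₂ : G → ℂ} (h₁ : (support ψ₁).Finite) (h₂ : (support ψ₂).Finite) :
    norm21 H (fun g => ψ₁ g + ψ₂ g) ≤ norm21 H ψ₁ + norm21 H ψ₂ := by
  have h₁₂ : (support fun g => ψ₁ g + ψ₂ g).Finite := (h₁.union h₂).subset (support_add _ _)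
  have hfiber (x : G ⧸ H) : fiberSum H (fun g => ‖ψ₁ g + ψ₂ g‖) x ≤
      fiberSum H (fun g => ‖ψ₁ g‖) x + fiberSum H (fun g => ‖ψ₂ g‖) x := by
    rw [fiberSum, fiberSum, fiberSum,
      ← (summable_fiber_norm H h₁ x).tsum_add (summable_fiber_norm H h₂ x)]
    exact (summable_fiber_norm H h₁₂ x).tsum_le_tsum (fun g => norm_add_le _ _)
      ((summable_fiber_norm H h₁ x).add (summable_fiber_norm H h₂ x))
  obtain ⟨hsum, hminkowski⟩ := sqrt_tsum_add_sq_le (fiberSum_nonneg H fun g => norm_nonneg _)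
    (fiberSum_nonneg H fun g => norm_nonneg _) (summable_fiberSum_norm_sq H h₁)
    (summable_fiberSum_norm_sq H h₂)
  refine le_trans (Real.sqrt_le_sqrt ?_) hminkowski
  exact (summable_fiberSum_norm_sq H h₁₂).tsum_le_tsum
    (fun x => pow_le_pow_left₀ (fiberSum_nonneg H (fun g => norm_nonneg _) x) (hfiber x) 2) hsum

lemma finite_support_translate {Φ : G → ℂ} (hΦ : (support Φ).Finite) (y : G) :
    (support fun g => Φ (y⁻¹ * g)).Finite :=
  hΦ.preimage (mul_right_injective y⁻¹).injOn

lemma norm21_sum_translate_le (c : G → ℂ) {Φ : G → ℂ} (hΦ : (support Φ).Finite)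
    (s : Finset G) :
    norm21 H (fun g => ∑ y ∈ s, c y * Φ (y⁻¹ * g)) ≤ (∑ y ∈ s, ‖c y‖) * norm21 H Φ := by
  classical
  induction s using Finset.induction_on with
  | empty => simp [norm21]
  | insert a s ha ih =>
    have hfin : (support fun g => ∑ y ∈ s, c y * Φ (y⁻¹ * g)).Finite :=
      (s.finite_toSet.biUnion fun y _ =>
        (finite_support_translate hΦ y).subset (support_mul_subset_right _ _)).subset
        (Finset.support_sum s _)
    simp only [Finset.sum_insert ha]
    calc norm21 H (fun g => c a * Φ (a⁻¹ * g) + ∑ y ∈ s, c y * Φ (y⁻¹ * g))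
        ≤ norm21 H (fun g => c a * Φ (a⁻¹ * g)) +
            norm21 H (fun g => ∑ y ∈ s, c y * Φ (y⁻¹ * g)) :=
          norm21_add_le H ((finite_support_translate hΦ a).subset
            (support_mul_subset_right _ _)) hfin
      _ ≤ ‖c a‖ * norm21 H Φ + (∑ y ∈ s, ‖c y‖) * norm21 H Φ := by
          rw [norm21_const_mul H, norm21_translate H]
          gcongr
      _ = (‖c a‖ + ∑ y ∈ s, ‖c y‖) * norm21 H Φ := (add_mul _ _ _).symm

lemma norm21_convC_le {F Φ : G → ℂ} {s : Finset G} (hF : support F ⊆ s)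
    (hΦ : (support Φ).Finite) :
    norm21 H (convC F Φ) ≤ (∑ y ∈ s, ‖F y‖) * norm21 H Φ := by
  have hconv : convC F Φ = fun g => ∑ y ∈ s, F y * Φ (y⁻¹ * g) := funext fun g =>
    tsum_eq_sum fun y hy => by rw [notMem_support.mp (fun h => hy (hF h)), zero_mul]
  rw [hconv]
  exact norm21_sum_translate_le H F hΦ s

lemma hNorm_nonneg (F : G → ℂ) : 0 ≤ hNorm H F :=
  Real.sSup_nonneg <| by rintro _ ⟨_, _, _, _, rfl⟩; exact norm21_nonneg H _

lemma norm21_convC_le_hNorm {F : G → ℂ} (hF : (support F).Finite) {φ : G → ℝ}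
    (hφ : (support φ).Finite) (hφ₀ : ∀ y, 0 ≤ φ y) (hφ₁ : norm21 H (fun g => (φ g : ℂ)) ≤ 1) :
    norm21 H (convC F fun g => (φ g : ℂ)) ≤ hNorm H F := by
  refine le_csSup ⟨∑ y ∈ hF.toFinset, ‖F y‖, ?_⟩ ⟨φ, hφ, hφ₀, hφ₁, rfl⟩
  rintro _ ⟨ψ, hψ, -, hψ₁, rfl⟩
  refine (norm21_convC_le H hF.coe_toFinset.ge
    (hψ.subset (support_comp_subset Complex.ofReal_zero ψ))).trans ?_
  exact mul_le_of_le_one_right (Finset.sum_nonneg fun y _ => norm_nonneg _) hψ₁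

end Norm21

section Subgroup

variable (H K : Subgroup G)

def quotientSubgroupOfInclusion : K ⧸ H.subgroupOf K → G ⧸ H :=
  Quotient.map' Subtype.val fun a b h => by
    rw [QuotientGroup.leftRel_apply] at h ⊢
    simpa [Subgroup.mem_subgroupOf] using h

lemma quotientSubgroupOfInclusion_mk (k : K) :
    quotientSubgroupOfInclusion H K (k : K ⧸ H.subgroupOf K) = ((k : G) : G ⧸ H) := rfl

lemma quotientSubgroupOfInclusion_injective : Injective (quotientSubgroupOfInclusion H K) := by
  rintro ⟨a⟩ ⟨b⟩ h
  have h' : ((a : G) : G ⧸ H) = (b : G) := h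
  rw [QuotientGroup.eq] at h'
  exact QuotientGroup.eq.mpr (by simpa [Subgroup.mem_subgroupOf] using h')

variable {H K}

lemma mem_of_extend_val_ne_zero {E : Type*} [Zero E] {f : K → E} {g : G}
    (h : extend Subtype.val f 0 g ≠ 0) : g ∈ K := by
  obtain ⟨k, -, rfl⟩ := support_extend_zero_subset h
  exact k.2

lemma extend_val_of_notMem {E : Type*} [Zero E] (f : K → E) {g : G} (hg : g ∉ K) :
    extend Subtype.val f 0 g = 0 :=
  extend_apply' _ _ _ fun ⟨k, hk⟩ => hg (hk ▸ k.2)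

lemma finite_support_extend_val {E : Type*} [Zero E] {f : K → E} (hf : (support f).Finite) :
    (support (extend Subtype.val f 0)).Finite :=
  (hf.image _).subset support_extend_zero_subset

lemma extend_val_mul (f : K → ℂ) (c : G → ℂ) :
    (fun g => extend Subtype.val f 0 g * c g) = extend Subtype.val (fun k => f k * c k) 0 := by
  funext g
  by_cases hg : g ∈ K
  · lift g to K using hg
    simp
  · rw [extend_val_of_notMem _ hg, extend_val_of_notMem _ hg, zero_mul]

lemma fiberSum_norm_extend_val (ψ : K → ℂ) (ξ : K ⧸ H.subgroupOf K) :
    fiberSum H (fun g => ‖extend Subtype.val ψ 0 g‖) (quotientSubgroupOfInclusion H K ξ) =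
      fiberSum (H.subgroupOf K) (fun k => ‖ψ k‖) ξ := by
  let j : {k : K // (k : K ⧸ H.subgroupOf K) = ξ} →
      {g : G // (g : G ⧸ H) = quotientSubgroupOfInclusion H K ξ} :=
    fun k => ⟨k.1, congrArg (quotientSubgroupOfInclusion H K) k.2⟩
  have hj : Injective j := fun a b h =>
    Subtype.ext <| Subtype.ext <| by simpa [j] using congrArg Subtype.val h
  rw [fiberSum, fiberSum, ← hj.tsum_eq]
  · exact tsum_congr fun k => by simp [j]
  · rintro ⟨g, hg⟩ hne
    have hgK := mem_of_extend_val_ne_zero (norm_ne_zero_iff.mp hne)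
    exact ⟨⟨⟨g, hgK⟩, quotientSubgroupOfInclusion_injective H K hg⟩, rfl⟩

lemma norm21_extend_val (ψ : K → ℂ) :
    norm21 H (extend Subtype.val ψ 0) = norm21 (H.subgroupOf K) ψ := by
  simp only [norm21_eq_sqrt_tsum_fiberSum, ← fiberSum_norm_extend_val]
  refine congrArg _ ((quotientSubgroupOfInclusion_injective H K).tsum_eq ?_).symm
  intro x hx
  obtain ⟨g, hg, rfl⟩ := support_fiberSum_subset H _ ((support_pow _ two_ne_zero).le hx)
  exact ⟨_, quotientSubgroupOfInclusion_mk H K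
    ⟨g, mem_of_extend_val_ne_zero (norm_ne_zero_iff.mp hg)⟩⟩

lemma convC_extend_val (f φ : K → ℂ) :
    convC (extend Subtype.val f 0) (extend Subtype.val φ 0) =
      extend Subtype.val (convC f φ) 0 := by
  funext g
  by_cases hg : g ∈ K
  · lift g to K using hg
    rw [Subtype.val_injective.extend_apply, convC, convC, ← Subtype.val_injective.tsum_eq]
    · exact tsum_congr fun k => by
        rw [Subtype.val_injective.extend_apply, ← Subtype.val_injective.extend_apply φ 0 (k⁻¹ * g)]
        rfl
    · intro y hy
      exact ⟨⟨y, mem_of_extend_val_ne_zero (left_ne_zero_of_mul hy)⟩, rfl⟩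
  · rw [extend_val_of_notMem _ hg, convC]
    refine (tsum_congr fun y => ?_).trans tsum_zero
    by_cases hy : y ∈ K
    · rw [extend_val_of_notMem φ fun h => hg (by simpa using K.mul_mem hy h), mul_zero]
    · rw [extend_val_of_notMem f hy, zero_mul]

lemma hNorm_subgroupOf_le {f : K → ℂ} (hf : (support f).Finite) :
    hNorm (H.subgroupOf K) f ≤ hNorm H (extend Subtype.val f 0) := by
  refine Real.sSup_le ?_ (hNorm_nonneg H _)
  rintro _ ⟨φ, hφ, hφ₀, hφ₁, rfl⟩
  have hΦ : (fun g => ((extend Subtype.val φ 0 g : ℝ) : ℂ)) =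
      extend Subtype.val (fun k => (φ k : ℂ)) 0 := by
    funext g
    by_cases hg : g ∈ K
    · lift g to K using hg
      simp
    · simp [extend_val_of_notMem _ hg]
  rw [← norm21_extend_val (H := H), ← convC_extend_val, ← hΦ]
  refine norm21_convC_le_hNorm H (finite_support_extend_val hf)
    (finite_support_extend_val hφ) (fun g => ?_) (by rwa [hΦ, norm21_extend_val])
  by_cases hg : g ∈ K
  · lift g to K using hg
    simpa using hφ₀ g
  · simp [extend_val_of_notMem _ hg]

theorem hNorm_subgroupOf_le_of_hNorm_le {C : ℝ} {w : G → ℝ}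
    (hineq : ∀ f : G → ℂ, (support f).Finite → hNorm H f ≤ C * norm21 H (fun g => f g * (w g : ℂ)))
    {f : K → ℂ} (hf : (support f).Finite) :
    hNorm (H.subgroupOf K) f ≤ C * norm21 (H.subgroupOf K) (fun k => f k * (w k : ℂ)) :=
  calc hNorm (H.subgroupOf K) f ≤ hNorm H (extend Subtype.val f 0) := hNorm_subgroupOf_le hf
    _ ≤ C * norm21 H (fun g => extend Subtype.val f 0 g * (w g : ℂ)) :=
        hineq _ (finite_support_extend_val hf)
    _ = C * norm21 (H.subgroupOf K) (fun k => f k * (w k : ℂ)) := by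
        rw [extend_val_mul, norm21_extend_val]

end Subgroup

section WordLength

variable {S : Set G}

lemma submonoid_closure_eq_top_of_inv_mem (hinv : ∀ s ∈ S, s⁻¹ ∈ S)
    (hS : Subgroup.closure S = ⊤) : Submonoid.closure S = ⊤ := by
  have hS_union : S ∪ S⁻¹ = S := Set.union_eq_left.mpr fun s hs => by simpa using hinv _ hs
  rw [← hS_union, ← Subgroup.closure_toSubmonoid, hS, Subgroup.top_toSubmonoid]

lemma wordLength_prod_le_length {l : List G} (hl : ∀ s ∈ l, s ∈ S) :
    wordLength S l.prod ≤ l.length :=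
  Nat.sInf_le ⟨l, hl, rfl, rfl⟩

lemma wordLength_one : wordLength S 1 = 0 :=
  Nat.le_zero.mp (wordLength_prod_le_length (l := []) (by simp))

lemma exists_list_length_eq_wordLength (hS : Submonoid.closure S = ⊤) (g : G) :
    ∃ l : List G, (∀ s ∈ l, s ∈ S) ∧ l.length = wordLength S g ∧ l.prod = g := by
  obtain ⟨l, hl, hprod⟩ := Submonoid.exists_list_of_mem_closure (hS ▸ Submonoid.mem_top g)
  exact Nat.sInf_mem (s := {n | ∃ l : List G, (∀ s ∈ l, s ∈ S) ∧ l.length = n ∧ l.prod = g})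
    ⟨_, l, hl, rfl, hprod⟩

lemma wordLength_mul_le (hS : Submonoid.closure S = ⊤) (a b : G) :
    wordLength S (a * b) ≤ wordLength S a + wordLength S b := by
  obtain ⟨la, hla, hlen_a, rfl⟩ := exists_list_length_eq_wordLength hS a
  obtain ⟨lb, hlb, hlen_b, rfl⟩ := exists_list_length_eq_wordLength hS b
  rw [← hlen_a, ← hlen_b, ← List.length_append, ← List.prod_append]
  exact wordLength_prod_le_length fun s hs => (List.mem_append.mp hs).elim (hla s) (hlb s)

lemma wordLength_prod_le (hS : Submonoid.closure S = ⊤) {n : ℕ} {l : List G}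
    (hl : ∀ g ∈ l, wordLength S g ≤ n) : wordLength S l.prod ≤ n * l.length := by
  induction l with
  | nil => simp [wordLength_one]
  | cons g l ih =>
    rw [List.prod_cons, List.length_cons, mul_add_one, add_comm]
    exact (wordLength_mul_le hS g l.prod).trans
      (add_le_add (hl g List.mem_cons_self) (ih fun x hx => hl x (List.mem_cons_of_mem g hx)))

lemma wordLength_map_le {K : Type*} [Group K] {SK : Set K} (hS : Submonoid.closure S = ⊤)
    (hSK : Submonoid.closure SK = ⊤) (φ : K →* G) {n : ℕ}
    (hn : ∀ s ∈ SK, wordLength S (φ s) ≤ n) (k : K) :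
    wordLength S (φ k) ≤ n * wordLength SK k := by
  obtain ⟨l, hl, hlen, rfl⟩ := exists_list_length_eq_wordLength hSK k
  rw [map_list_prod, ← hlen, ← List.length_map φ]
  refine wordLength_prod_le hS fun g hg => ?_
  obtain ⟨s, hs, rfl⟩ := List.mem_map.mp hg
  exact hn s (hl s hs)

lemma finite_setOf_wordLength_le (hfin : S.Finite) (hS : Submonoid.closure S = ⊤) (n : ℕ) :
    {g | wordLength S g ≤ n}.Finite := by
  have : Finite S := hfin.to_subtype
  refine ((List.finite_length_le S n).image fun l => (l.map (↑)).prod).subset ?_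
  intro g hg
  obtain ⟨l, hl, hlen, rfl⟩ := exists_list_length_eq_wordLength hS g
  lift l to List S using hl
  refine ⟨l, ?_, rfl⟩
  rw [Set.mem_ofPred_eq, ← List.length_map Subtype.val, hlen]
  exact hg

end WordLength

lemma image_setOf_le_subset_of_le_mul {α β : Type*} {ℓ : α → ℕ} {ℓK : β → ℕ} {ι : β → α} {n : ℕ}
    (hι : ∀ k, ℓ (ι k) ≤ n * ℓK k) (w : α → ℝ) (t : ℕ) :
    (fun k => w (ι k)) '' {k | ℓK k ≤ t} ⊆ w '' {g | ℓ g ≤ n * t} := by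
  rintro _ ⟨k, hk, rfl⟩
  exact ⟨ι k, (hι k).trans (Nat.mul_le_mul_left n hk), rfl⟩

section RadialMajorant

variable {K : Type*} [Group K]

lemma one_le_radialMaj {ℓ : G → ℕ} {w : G → ℝ} (hw : ∀ g, 1 ≤ w g) (hℓ : ℓ 1 = 0) {t : ℕ}
    (hbdd : BddAbove (w '' {g | ℓ g ≤ t})) : 1 ≤ radialMaj ℓ w t :=
  le_csSup_of_le hbdd ⟨1, by simp [hℓ], rfl⟩ (hw 1)

lemma tendsto_log_div_of_le_comp_mul {u v : ℕ → ℝ} {n : ℕ} (hn : 0 < n) (hu : ∀ t, 1 ≤ u t)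
    (huv : ∀ t, u t ≤ v (n * t))
    (hv : Tendsto (fun t : ℕ => Real.log (v t) / t) atTop (𝓝 0)) :
    Tendsto (fun t : ℕ => Real.log (u t) / t) atTop (𝓝 0) := by
  have hmul : Tendsto (fun t => n * t) atTop atTop :=
    tendsto_atTop_mono (fun t => Nat.le_mul_of_pos_left t hn) tendsto_id
  have hupper := (hv.comp hmul).const_mul (n : ℝ)
  rw [mul_zero] at hupper
  refine tendsto_of_tendsto_of_tendsto_of_le_of_le tendsto_const_nhds hupper
    (fun t => div_nonneg (Real.log_nonneg (hu t)) t.cast_nonneg) fun t => ?_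
  rcases t.eq_zero_or_pos with rfl | ht
  · simp
  have hlog : Real.log (u t) ≤ Real.log (v (n * t)) :=
    Real.log_le_log (zero_lt_one.trans_le (hu t)) (huv t)
  calc Real.log (u t) / t ≤ Real.log (v (n * t)) / t := by gcongr
    _ = n * (Real.log (v (n * t)) / ((n * t : ℕ) : ℝ)) := by
        push_cast
        field_simp

lemma tendsto_log_radialMaj_comp_div {S : Finset G} (hS : Submonoid.closure (S : Set G) = ⊤)
    {SK : Finset K} (hSK : Submonoid.closure (SK : Set K) = ⊤) (φ : K →* G) {w : G → ℝ}
    (hw : ∀ g, 1 ≤ w g)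
    (hW : Tendsto (fun t : ℕ => Real.log (radialMaj (wordLength (S : Set G)) w t) / t)
      atTop (𝓝 0)) :
    Tendsto (fun t : ℕ => Real.log (radialMaj (wordLength (SK : Set K)) (fun k => w (φ k)) t) / t)
      atTop (𝓝 0) := by
  set n := SK.sup (fun s => wordLength (S : Set G) (φ s)) + 1
  have hφ : ∀ k, wordLength (S : Set G) (φ k) ≤ n * wordLength (SK : Set K) k :=
    wordLength_map_le hS hSK φ fun s hs =>
    (Finset.le_sup (f := fun s => wordLength (S : Set G) (φ s)) hs).trans (Nat.le_add_right _ 1)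
  have hbdd (t : ℕ) : BddAbove (w '' {g | wordLength (S : Set G) g ≤ t}) :=
    ((finite_setOf_wordLength_le S.finite_toSet hS t).image w).bddAbove
  refine tendsto_log_div_of_le_comp_mul (n := n) (Nat.zero_lt_succ _) (fun t => ?_) (fun t => ?_) hW
  · exact one_le_radialMaj (fun k => hw (φ k)) wordLength_one
      ((hbdd _).mono (image_setOf_le_subset_of_le_mul hφ w t))
  · exact csSup_le_csSup (hbdd _) ⟨_, 1, by simp [wordLength_one], rfl⟩
      (image_setOf_le_subset_of_le_mul hφ w t)

end RadialMajorant

end PaperRD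

theorem statement14_general {G : Type*} [Group G] (H : Subgroup G)
    (C : ℝ) (hC : 0 < C) (w : G → ℝ) (hw : ∀ g, 1 ≤ w g)
    (hineq : ∀ f : G → ℂ, (Function.support f).Finite →
      PaperRD.hNorm H f ≤ C * PaperRD.norm21 H (fun g => f g * (w g : ℂ)))
    (K : Subgroup G) :
    (∀ f : K → ℂ, (Function.support f).Finite →
      PaperRD.hNorm (H.subgroupOf K) f ≤
        C * PaperRD.norm21 (H.subgroupOf K) (fun k => f k * (w (k : G) : ℂ))) ∧
    (∀ (S : Finset G), (∀ s ∈ S, s⁻¹ ∈ S) → Subgroup.closure (S : Set G) = ⊤ →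
      Filter.Tendsto
        (fun t : ℕ =>
          Real.log (PaperRD.radialMaj (PaperRD.wordLength (S : Set G)) w t) / (t : ℝ))
        Filter.atTop (𝓝 0) →
      ∀ (SK : Finset K), (∀ s ∈ SK, s⁻¹ ∈ SK) →
        Subgroup.closure (SK : Set K) = ⊤ →
        PaperRD.SLCsubexp (H.subgroupOf K) (PaperRD.wordLength (SK : Set K))) := by
  have hK : ∀ f : K → ℂ, (Function.support f).Finite →
      PaperRD.hNorm (H.subgroupOf K) f ≤
        C * PaperRD.norm21 (H.subgroupOf K) (fun k => f k * (w (k : G) : ℂ)) :=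
    fun f hf => PaperRD.hNorm_subgroupOf_le_of_hNorm_le hineq hf
  refine ⟨hK, fun S hS_inv hS hW SK hSK_inv hSK => ⟨C, hC, fun k => w k, fun k => hw k, hK, ?_⟩⟩
  exact PaperRD.tendsto_log_radialMaj_comp_div
    (PaperRD.submonoid_closure_eq_top_of_inv_mem hS_inv hS)
    (PaperRD.submonoid_closure_eq_top_of_inv_mem hSK_inv hSK) K.subtype hw hW

/-- If the pair `(G,H)` satisfies `‖f‖_h ≤ C_h ‖f·w‖_{(2,1)}` for a
weight `w : G → [1,∞)`, `K ≤ G` is a subgroup and `L = K ∩ H`, then the same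
convolution estimate holds on the pair `(K,L)` with the restricted weight; moreover,
if `G` carries a word length with subexponential radial majorant of `w` and `K` is
generated by a finite symmetric set with word length `ℓ_K`, then
`(K,L) ∈ SLC_subexp` with respect to `ℓ_K`. -/
theorem statement14 {G : Type*} [Group G] [Countable G] (H : Subgroup G)
    (C : ℝ) (hC : 0 < C) (w : G → ℝ) (hw : ∀ g, 1 ≤ w g)
    (hineq : ∀ f : G → ℂ, (Function.support f).Finite →
      PaperRD.hNorm H f ≤ C * PaperRD.norm21 H (fun g => f g * (w g : ℂ)))
    (K : Subgroup G) :
    (∀ f : K → ℂ, (Function.support f).Finite →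
      PaperRD.hNorm (H.subgroupOf K) f ≤
        C * PaperRD.norm21 (H.subgroupOf K) (fun k => f k * (w (k : G) : ℂ))) ∧
    (∀ (S : Finset G), (∀ s ∈ S, s⁻¹ ∈ S) → Subgroup.closure (S : Set G) = ⊤ →
      Filter.Tendsto
        (fun t : ℕ =>
          Real.log (PaperRD.radialMaj (PaperRD.wordLength (S : Set G)) w t) / (t : ℝ))
        Filter.atTop (𝓝 0) →
      ∀ (SK : Finset K), (∀ s ∈ SK, s⁻¹ ∈ SK) →
        Subgroup.closure (SK : Set K) = ⊤ →
        PaperRD.SLCsubexp (H.subgroupOf K) (PaperRD.wordLength (SK : Set K))) :=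
  statement14_general H C hC w hw hineq K
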